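/- Let f̄ and f be nonnegative continuous functions on the box B = [φ₁,φ₂]×[θ₁,θ₂]×[d₁,d₂] with f̄ strictly positive on B. Let R̄ = ∫_B f̄ b b^H and R = ∫_B f b b^H with b : B → ℂ^M continuous. Then the column space (range) of R is contained in the column space of R̄. -/

import Mathlib

open MeasureTheory

-- Auxiliary: for self-adjoint operators on a finite-dimensional complex inner product
-- space, the range is the orthogonal complement of the kernel.
private lemma range_eq_ker_orth {E : Type*} [NormedAddCommGroup E] [InnerProductSpace ℂ E]
    [FiniteDimensional ℂ E] (T : E →ₗ[ℂ] E) (hT : LinearMap.adjoint T = T) :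
    LinearMap.range T = (LinearMap.ker T)ᗮ := by
  apply Submodule.eq_of_le_of_finrank_eq
  · rintro _ ⟨x, rfl⟩
    intro w hw
    have : T w = 0 := hw
    calc (inner ℂ w (T x) : ℂ) = inner ℂ (LinearMap.adjoint T w) x := by
          rw [LinearMap.adjoint_inner_left]
      _ = inner ℂ (T w) x := by rw [hT]
      _ = 0 := by rw [this]; simp
  · have h1 := LinearMap.finrank_range_add_finrank_ker T
    have h2 := Submodule.finrank_add_finrank_orthogonal (LinearMap.ker T)
    omega

private lemma range_le_of_ker_le {E : Type*} [NormedAddCommGroup E] [InnerProductSpace ℂ E]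
    [FiniteDimensional ℂ E] (S T : E →ₗ[ℂ] E)
    (hS : LinearMap.adjoint S = S) (hT : LinearMap.adjoint T = T)
    (hker : LinearMap.ker T ≤ LinearMap.ker S) :
    LinearMap.range S ≤ LinearMap.range T := by
  rw [range_eq_ker_orth S hS, range_eq_ker_orth T hT]
  exact Submodule.orthogonal_le hker

private lemma matrix_range_le_of_ker (N : ℕ) (A C : Matrix (Fin N) (Fin N) ℂ)
    (hA : A.IsHermitian) (hC : C.IsHermitian)
    (h : ∀ v, A.mulVec v = 0 → C.mulVec v = 0) :
    LinearMap.range C.mulVecLin ≤ LinearMap.range A.mulVecLin := by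
  set TA := Matrix.toEuclideanLin A with hTA
  set TC := Matrix.toEuclideanLin C with hTC
  have hAsa : LinearMap.adjoint TA = TA := by
    rw [hTA, ← Matrix.toEuclideanLin_conjTranspose_eq_adjoint, hA.eq]
  have hCsa : LinearMap.adjoint TC = TC := by
    rw [hTC, ← Matrix.toEuclideanLin_conjTranspose_eq_adjoint, hC.eq]
  have hker : LinearMap.ker TA ≤ LinearMap.ker TC := by
    intro x hx
    have hx' : A.mulVec (WithLp.equiv 2 (Fin N → ℂ) x) = 0 := by
      have := congrArg (WithLp.equiv 2 (Fin N → ℂ)) (LinearMap.mem_ker.mp hx)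
      simpa [hTA, Matrix.ofLp_toEuclideanLin_apply] using this
    have := h _ hx'
    have : TC x = 0 := by
      apply (WithLp.equiv 2 (Fin N → ℂ)).injective
      simpa [hTC, Matrix.ofLp_toEuclideanLin_apply] using this
    exact LinearMap.mem_ker.mpr this
  have hrange := range_le_of_ker_le TC TA hCsa hAsa hker
  rintro _ ⟨v, rfl⟩
  have hv : TC ((WithLp.equiv 2 (Fin N → ℂ)).symm v) ∈ LinearMap.range TA :=
    hrange (LinearMap.mem_range_self _ _)
  obtain ⟨u, hu⟩ := hv
  refine ⟨WithLp.equiv 2 (Fin N → ℂ) u, ?_⟩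
  have := congrArg (WithLp.equiv 2 (Fin N → ℂ)) hu
  simpa [hTA, hTC, Matrix.ofLp_toEuclideanLin_apply, Matrix.mulVecLin_apply] using this

theorem subspace_inclusion (M : ℕ)
    (φ₁ φ₂ θ₁ θ₂ d₁ d₂ : ℝ)
    (B : Set (ℝ × ℝ × ℝ))
    (hB : B = Set.Icc φ₁ φ₂ ×ˢ Set.Icc θ₁ θ₂ ×ˢ Set.Icc d₁ d₂)
    (fbar f : ℝ × ℝ × ℝ → ℝ)
    (hfbar_nonneg : ∀ x ∈ B, 0 ≤ fbar x) (hf_nonneg : ∀ x ∈ B, 0 ≤ f x)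
    (hfbar_cont : ContinuousOn fbar B) (hf_cont : ContinuousOn f B)
    (hfbar_pos : ∀ x ∈ B, 0 < fbar x)
    (b : ℝ × ℝ × ℝ → Fin M → ℂ) (hb : Continuous b)
    (Rbar R : Matrix (Fin M) (Fin M) ℂ)
    (hRbar : ∀ n m, Rbar n m = ∫ x in B, (fbar x : ℂ) * (b x n * star (b x m)))
    (hR : ∀ n m, R n m = ∫ x in B, (f x : ℂ) * (b x n * star (b x m))) :
    LinearMap.range R.mulVecLin ≤ LinearMap.range Rbar.mulVecLin := by
  -- basic facts about B
  have hBcompact : IsCompact B := by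
    rw [hB]; exact (isCompact_Icc.prod (isCompact_Icc.prod isCompact_Icc))
  have hBclosed : IsClosed B := hBcompact.isClosed
  have hBmeas : MeasurableSet B := hBclosed.measurableSet
  have hbn : ∀ n : Fin M, Continuous fun x => b x n := fun n => (continuous_apply n).comp hb
  -- integrability helper
  have hint : ∀ (g : ℝ × ℝ × ℝ → ℝ), ContinuousOn g B → ∀ (h : ℝ × ℝ × ℝ → ℂ), Continuous h →
      IntegrableOn (fun x => (g x : ℂ) * h x) B volume := by
    intro g hg h hh
    exact (((Complex.continuous_ofReal.comp_continuousOn hg)).mul hh.continuousOn).integrableOn_compact hBcompact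
  -- Hermitian-ness
  have herm : ∀ (g : ℝ × ℝ × ℝ → ℝ) (A : Matrix (Fin M) (Fin M) ℂ),
      (∀ n m, A n m = ∫ x in B, (g x : ℂ) * (b x n * star (b x m))) → A.IsHermitian := by
    intro g A hA
    ext n m
    rw [Matrix.conjTranspose_apply, hA, hA, RCLike.star_def, ← integral_conj]
    congr 1; ext x
    simp only [Complex.star_def, map_mul, Complex.conj_conj, Complex.conj_ofReal]
    ring
  have hRbarH : Rbar.IsHermitian := herm fbar Rbar hRbar
  have hRH : R.IsHermitian := herm f R hR
  -- kernel inclusion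
  apply matrix_range_le_of_ker M Rbar R hRbarH hRH
  intro v hv
  set c : ℝ × ℝ × ℝ → ℂ := fun x => ∑ m, star (b x m) * v m with hc
  have hc_cont : Continuous c := by
    apply continuous_finset_sum
    intro m _
    exact ((hbn m).star.mul continuous_const)
  -- quadratic form is zero
  have hquad : (0 : ℂ) = ∫ x in B, ((fbar x : ℂ)) * (star (c x) * c x) := by
    have h1 : ∑ n, star (v n) * (Rbar.mulVec v) n = 0 := by
      rw [hv]; simp
    rw [← h1]
    have h2 : ∀ n, star (v n) * (Rbar.mulVec v) n
        = ∫ x in B, ∑ m, star (v n) * ((fbar x : ℂ) * (b x n * star (b x m))) * v m := by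
      intro n
      rw [Matrix.mulVec, dotProduct, Finset.mul_sum]
      rw [integral_finset_sum]
      · congr 1; ext m
        rw [hRbar, ← integral_mul_const, ← integral_const_mul]
        congr 1; ext x; ring
      · intro m _
        have : (fun x => star (v n) * ((fbar x : ℂ) * (b x n * star (b x m))) * v m)
            = fun x => (fbar x : ℂ) * (star (v n) * (b x n * star (b x m)) * v m) := by
          ext x; ring
        rw [this]
        exact hint fbar hfbar_cont _ (by fun_prop)
    rw [Finset.sum_congr rfl (fun n _ => h2 n)]
    rw [← integral_finset_sum]
    · congr 1; ext x
      rw [hc]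
      simp only [star_sum, star_mul, star_star]
      rw [Finset.sum_mul, Finset.mul_sum]
      congr 1; ext n
      rw [Finset.mul_sum, Finset.mul_sum]
      congr 1; ext m
      ring
    · intro n _
      apply integrable_finset_sum
      intro m _
      have : (fun x => star (v n) * ((fbar x : ℂ) * (b x n * star (b x m))) * v m)
          = fun x => (fbar x : ℂ) * (star (v n) * (b x n * star (b x m)) * v m) := by
        ext x; ring
      rw [this]
      exact hint fbar hfbar_cont _ (by fun_prop)
  -- convert to a real integral
  have hre : ∫ x in B, (fbar x * Complex.normSq (c x)) = 0 := by
    have heq : (fun x => ((fbar x : ℂ)) * (star (c x) * c x))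
        = fun x => ((fbar x * Complex.normSq (c x) : ℝ) : ℂ) := by
      ext x
      rw [RCLike.star_def, ← Complex.normSq_eq_conj_mul_self]
      push_cast
      ring
    have hcast : ∫ x in B, ((fbar x * Complex.normSq (c x) : ℝ) : ℂ)
        = ((∫ x in B, fbar x * Complex.normSq (c x) : ℝ) : ℂ) :=
      Complex.ofRealLI.integral_comp_comm (fun x => fbar x * Complex.normSq (c x))
    rw [heq, hcast] at hquad
    exact_mod_cast hquad.symm
  -- a.e. vanishing of c on B
  have hgint : IntegrableOn (fun x => fbar x * Complex.normSq (c x)) B volume :=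
    (hfbar_cont.mul ((Complex.continuous_normSq.comp hc_cont).continuousOn)).integrableOn_compact hBcompact
  have hgnn : 0 ≤ᵐ[volume.restrict B] fun x => fbar x * Complex.normSq (c x) := by
    filter_upwards [ae_restrict_mem hBmeas] with x hx
    exact mul_nonneg (hfbar_nonneg x hx) (Complex.normSq_nonneg _)
  have hae := (integral_eq_zero_iff_of_nonneg_ae hgnn hgint).mp hre
  have hc0 : ∀ᵐ x ∂(volume.restrict B), c x = 0 := by
    filter_upwards [hae, ae_restrict_mem hBmeas] with x hx hxB
    have hpos := hfbar_pos x hxB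
    have : Complex.normSq (c x) = 0 := by
      by_contra hne
      have := mul_pos hpos (lt_of_le_of_ne (Complex.normSq_nonneg _) (Ne.symm hne))
      simp only [Pi.zero_apply] at hx
      linarith
    exact Complex.normSq_eq_zero.mp this
  -- conclude R v = 0
  funext n
  have h2 : (R.mulVec v) n = ∫ x in B, (f x : ℂ) * (b x n * c x) := by
    rw [Matrix.mulVec, dotProduct]
    have : ∀ m : Fin M, R n m * v m = ∫ x in B, (f x : ℂ) * (b x n * (star (b x m) * v m)) := by
      intro m
      rw [hR, ← integral_mul_const]
      congr 1; ext x; ring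
    rw [Finset.sum_congr rfl (fun m _ => this m), ← integral_finset_sum]
    · congr 1; ext x
      simp only [hc, Finset.mul_sum]
    · intro m _
      exact hint f hf_cont _ (by fun_prop)
  rw [h2]
  rw [Pi.zero_apply]
  rw [integral_congr_ae (g := fun _ => (0:ℂ))]
  · exact integral_zero _ _
  · filter_upwards [hc0] with x hx
    rw [hx]; ring
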